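/- arXiv:math/0504342 — 5 statements merged into one kernel-verified Lean document; each statement's English description precedes it below -/
import Mathlib

section
/- For every n ≥ 1, the identity ∑_{i=n}^{2n−1} ((−1)^{n+i}/i) · C(i,n) · C(3n, i+1+n) = C(2n,n)/(n+1) holds in the rational numbers. -/
/-!
After the substitution `j = 2n - 1 - i` and `C(i, n) / i = C(i - 1, n - 1) / n`, the sum becomes
`(-1)^(n-1) / n * ∑_{j < n} (-1)^j C(3n, j) C(2n - 2 - j, n - 1)`. The inner sum is the coefficient
of `x^(n-1)` in `(1 - x)^(3n) (1 - x)^(-n) = (1 - x)^(2n)`, i.e. `(-1)^(n-1) C(2n, n - 1)`,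
and `C(2n, n - 1) / n = C(2n, n) / (n + 1)`.
-/

open PowerSeries Finset

theorem PowerSeries.coeff_one_sub_X_pow {R : Type*} [CommRing R] (m d : ℕ) :
    coeff d ((1 - X : R⟦X⟧) ^ m) = (-1) ^ d * m.choose d := by
  have h : (1 - X : R⟦X⟧) ^ m = rescale (-1) (((1 + Polynomial.X) ^ m : Polynomial R) : R⟦X⟧) := by
    simp [sub_eq_add_neg]
  rw [h, coeff_rescale, Polynomial.coeff_coe, Polynomial.coeff_one_add_X_pow]

theorem sum_neg_one_pow_mul_choose_mul_choose {R : Type*} [CommRing R] (m k d : ℕ) :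
    ∑ j ∈ range (d + 1), (-1 : R) ^ j * (m + k + 1).choose j * (k + (d - j)).choose k
      = (-1) ^ d * m.choose d := by
  have h := congrArg (coeff d) (one_sub_pow_add_mul_invOneSubPow_val_eq_one_sub_pow R m (k + 1))
  rw [coeff_mul, Nat.sum_antidiagonal_eq_sum_range_succ_mk, coeff_one_sub_X_pow] at h
  simpa [coeff_one_sub_X_pow, invOneSubPow_val_succ_eq_mk_add_choose, add_assoc] using h

theorem alternating_term_reflect (m i : ℕ) (h₁ : m + 1 ≤ i) (h₂ : i ≤ 2 * m + 1) :
    (-1 : ℚ) ^ (m + 1 + i) / i * i.choose (m + 1) * (3 * (m + 1)).choose (i + 1 + (m + 1))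
      = (-1) ^ m / (m + 1) * ((-1) ^ (2 * m + 1 - i) * (3 * (m + 1)).choose (2 * m + 1 - i)
          * (m + (m - (2 * m + 1 - i))).choose m) := by
  obtain ⟨a, rfl⟩ : ∃ a, i = a + 1 := ⟨i - 1, by omega⟩
  have hsymm : (3 * (m + 1)).choose (a + 1 + 1 + (m + 1))
      = (3 * (m + 1)).choose (2 * m + 1 - (a + 1)) :=
    Nat.choose_symm_of_eq_add (by omega)
  have hsign : (-1 : ℚ) ^ (m + 1 + (a + 1)) = (-1) ^ m * (-1) ^ (2 * m + 1 - (a + 1)) := by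
    rw [neg_one_pow_eq_pow_mod_two, ← pow_add, neg_one_pow_eq_pow_mod_two (m + _)]
    congr 1
    omega
  have hratio : ((a + 1).choose (m + 1) : ℚ) / ((a + 1 : ℕ) : ℚ) = a.choose m / (m + 1) := by
    rw [div_eq_div_iff (by positivity) (by positivity)]
    exact_mod_cast (Nat.add_one_mul_choose_eq a m).symm.trans (mul_comm _ _)
  rw [hsymm, hsign, show m + (m - (2 * m + 1 - (a + 1))) = a by omega]
  linear_combination (-1 : ℚ) ^ m * (-1) ^ (2 * m + 1 - (a + 1))
    * (3 * (m + 1)).choose (2 * m + 1 - (a + 1)) * hratio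

theorem alternating_sum_eq_sum_range_reflect (m : ℕ) :
    ∑ i ∈ Icc (m + 1) (2 * m + 1),
        (-1 : ℚ) ^ (m + 1 + i) / i * i.choose (m + 1) * (3 * (m + 1)).choose (i + 1 + (m + 1))
      = (-1 : ℚ) ^ m / (m + 1)
          * ∑ j ∈ range (m + 1), (-1 : ℚ) ^ j * (3 * (m + 1)).choose j * (m + (m - j)).choose m := by
  rw [mul_sum]
  refine sum_nbij' (fun i ↦ 2 * m + 1 - i) (fun j ↦ 2 * m + 1 - j) ?_ ?_ ?_ ?_
    (fun i hi ↦ alternating_term_reflect m i (mem_Icc.1 hi).1 (mem_Icc.1 hi).2) <;>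
  simp only [mem_Icc, mem_range] <;> omega

/-- For every `n ≥ 1`,
`∑_{i=n}^{2n-1} ((-1)^{n+i}/i) C(i,n) C(3n, i+1+n) = C(2n,n)/(n+1)` in `ℚ`. -/
theorem alternating_sum_eq_catalan (n : ℕ) (hn : 1 ≤ n) :
    ∑ i ∈ Finset.Icc n (2 * n - 1),
        (-1 : ℚ) ^ (n + i) / (i : ℚ) * (Nat.choose i n : ℚ) *
          (Nat.choose (3 * n) (i + 1 + n) : ℚ)
      = (Nat.choose (2 * n) n : ℚ) / ((n : ℚ) + 1) := by
  obtain ⟨m, rfl⟩ : ∃ m, n = m + 1 := ⟨n - 1, by omega⟩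
  have hcatalan :
      ((2 * (m + 1)).choose (m + 1) : ℚ) * (m + 1) = (2 * (m + 1)).choose m * (m + 2) := by
    have h := Nat.choose_succ_right_eq (2 * (m + 1)) m
    rw [show 2 * (m + 1) - m = m + 2 by omega] at h
    exact_mod_cast h
  have hsq : ((-1 : ℚ) ^ m) ^ 2 = 1 := by rw [← pow_mul, pow_mul', neg_one_sq, one_pow]
  rw [show 2 * (m + 1) - 1 = 2 * m + 1 by omega, alternating_sum_eq_sum_range_reflect,
    show 3 * (m + 1) = 2 * (m + 1) + m + 1 by ring, sum_neg_one_pow_mul_choose_mul_choose]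
  field_simp
  push_cast
  linear_combination ((2 * (m + 1)).choose m * (m + 2) : ℚ) * hsq - hcatalan
end

section
/- For every n ≥ 1 and m ≥ 0, the identity ∑_{k=0}^{n−1} C(n,k) · C(n,k+1) · C(k,m) = C(n,m) · C(2n−m, n+1) holds. -/
/-!
Since `C(n,k) C(k,m) = C(n,m) C(n-m,k-m)` and `C(n,k+1) = C(n,n-k-1)`, the sum is `C(n,m)` times
`∑_j C(n-m,j) C(n,n-m-1-j)`, which Vandermonde's identity evaluates to
`C(2n-m, n-m-1) = C(2n-m, n+1)`.
-/

open Finset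

namespace Nat

theorem sum_range_choose_mul_choose_sub (a b r : ℕ) :
    ∑ j ∈ range (r + 1), a.choose j * b.choose (r - j) = (a + b).choose r := by
  rw [add_choose_eq, Finset.Nat.sum_antidiagonal_eq_sum_range_succ_mk]

theorem sum_range_mul_choose_eq_zero (f : ℕ → ℕ) {n m : ℕ} (h : n ≤ m) :
    ∑ k ∈ range n, f k * k.choose m = 0 :=
  sum_eq_zero fun k hk => by rw [choose_eq_zero_of_lt ((mem_range.1 hk).trans_le h), mul_zero]

theorem choose_add_mul_choose_add_succ_mul_choose {n m j : ℕ} (h : m + j < n) :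
    n.choose (m + j) * n.choose (m + j + 1) * (m + j).choose m =
      n.choose m * ((n - m).choose j * n.choose (n - (m + j + 1))) := by
  have hmul : n.choose (m + j) * (m + j).choose m = n.choose m * (n - m).choose j := by
    rw [choose_mul (le_add_right m j), Nat.add_sub_cancel_left]
  rw [choose_symm h, mul_right_comm, hmul, mul_assoc]

end Nat

theorem narayana_sum_identity_general (n m : ℕ) :
    ∑ k ∈ Finset.range n, Nat.choose n k * Nat.choose n (k + 1) * Nat.choose k m =
      Nat.choose n m * Nat.choose (2 * n - m) (n + 1) := by
  rcases le_or_gt n m with hnm | hmn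
  · rw [Nat.sum_range_mul_choose_eq_zero _ hnm,
      Nat.choose_eq_zero_of_lt (n := 2 * n - m) (by omega), mul_zero]
  obtain ⟨r, rfl⟩ : ∃ r, n = m + (r + 1) := ⟨n - m - 1, by omega⟩
  rw [sum_range_add, Nat.sum_range_mul_choose_eq_zero _ le_rfl, zero_add]
  calc ∑ j ∈ range (r + 1), (m + (r + 1)).choose (m + j) * (m + (r + 1)).choose (m + j + 1) *
          (m + j).choose m
      = ∑ j ∈ range (r + 1),
          (m + (r + 1)).choose m * ((r + 1).choose j * (m + (r + 1)).choose (r - j)) := by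
        refine sum_congr rfl fun j hj => ?_
        have hjr := mem_range.1 hj
        rw [Nat.choose_add_mul_choose_add_succ_mul_choose (by omega), Nat.add_sub_cancel_left,
          show m + (r + 1) - (m + j + 1) = r - j by omega]
    _ = (m + (r + 1)).choose m * (r + 1 + (m + (r + 1))).choose r := by
        rw [← mul_sum, Nat.sum_range_choose_mul_choose_sub]
    _ = (m + (r + 1)).choose m * (2 * (m + (r + 1)) - m).choose (m + (r + 1) + 1) := by
        rw [Nat.choose_symm_of_eq_add (a := r) (b := m + (r + 1) + 1) (by omega),
          show r + 1 + (m + (r + 1)) = 2 * (m + (r + 1)) - m by omega]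

/-- For every `n ≥ 1` and `m ≥ 0`,
`∑_{k=0}^{n-1} C(n,k) C(n,k+1) C(k,m) = C(n,m) C(2n-m, n+1)`. -/
theorem narayana_sum_identity (n m : ℕ) (hn : 1 ≤ n) :
    ∑ k ∈ Finset.range n, Nat.choose n k * Nat.choose n (k + 1) * Nat.choose k m =
      Nat.choose n m * Nat.choose (2 * n - m) (n + 1) :=
  narayana_sum_identity_general n m
end

section
/- For every n ≥ 0, |L_n| = |P_n|: the number of closed lattice walks in L_n equals the number of lattice paths from (0,0) to (2n,n) with steps E=(1,0) and N=(0,1) that never go above the line y = x/2. -/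
/-- Steps of a lattice walk: east, west, north, south. -/
inductive WStep : Type
  | E : WStep
  | W : WStep
  | N : WStep
  | S : WStep
  deriving DecidableEq

/-- The displacement vector of a walk step. -/
def WStep.vec : WStep → ℤ × ℤ
  | .E => (1, 0)
  | .W => (-1, 0)
  | .N => (0, 1)
  | .S => (0, -1)

/-- The position of the walk `w` after its first `i` steps. -/
def wpos (w : List WStep) (i : ℕ) : ℤ × ℤ := ((w.take i).map WStep.vec).sum

/-- `w` is a closed lattice walk in `L_n`: it has length `2n`, starts and ends at the
origin, every visited point `(x, y)` satisfies `y ≤ x`, and every `N` step is immediately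
followed by a (possibly empty) block of consecutive `W` steps and then one `S` step. -/
def IsLWalk (n : ℕ) (w : List WStep) : Prop :=
  w.length = 2 * n ∧ wpos w w.length = 0 ∧
  (∀ i ≤ w.length, (wpos w i).2 ≤ (wpos w i).1) ∧
  (∀ i : ℕ, w[i]? = some WStep.N → ∃ k : ℕ,
    (∀ j < k, w[i + 1 + j]? = some WStep.W) ∧ w[i + 1 + k]? = some WStep.S)

/-- Steps of a lattice path: east `E = (1,0)` and north `N = (0,1)`. -/
inductive PStep : Type
  | E : PStep
  | N : PStep
  deriving DecidableEq

/-- The displacement vector of a path step. -/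
def PStep.vec : PStep → ℤ × ℤ
  | .E => (1, 0)
  | .N => (0, 1)

/-- The position of the path `p` after its first `i` steps. -/
def ppos (p : List PStep) (i : ℕ) : ℤ × ℤ := ((p.take i).map PStep.vec).sum

/-- `p` is a lattice path in `P_n`: it goes from `(0,0)` to `(2n, n)` using steps `E` and
`N`, and every point `(x, y)` on it satisfies `y ≤ x/2`, i.e. `2y ≤ x`. -/
def IsPPath (n : ℕ) (p : List PStep) : Prop :=
  ppos p p.length = ((2 * n : ℤ), (n : ℤ)) ∧ ∀ i ≤ p.length, 2 * (ppos p i).2 ≤ (ppos p i).1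

/-!
Inside a walk of `L_n` the height is `0`, except within the blocks `N W^k S`, where it is `1`.
So a walk is a word accepted by a one-counter automaton whose state is the current point
`(x, y)` with `y ∈ {0, 1}`, and a path of `P_n` is a word accepted by one whose state is the
slack `x - 2y`. The substitution `E ↦ EE, W ↦ N, N ↦ EN, S ↦ E` turns a run of the first
automaton from `(x, y)` into a run of the second from `2x - y`, and the path is decoded back
deterministically by following the same states; lengths match because `2 · 3n = 3 · 2n`.
-/

section StaysIn

variable {α M : Type*} [AddMonoid M]

def StaysIn (f : α → M) (D : Set M) (a : M) (l : List α) : Prop :=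
  ∀ i ≤ l.length, a + ((l.take i).map f).sum ∈ D

variable {f : α → M} {D : Set M} {a : M}

@[simp] theorem staysIn_nil : StaysIn f D a [] ↔ a ∈ D := by simp [StaysIn]

@[simp] theorem staysIn_cons {x : α} {l : List α} :
    StaysIn f D a (x :: l) ↔ a ∈ D ∧ StaysIn f D (a + f x) l := by
  simp only [StaysIn, List.length_cons, ← Nat.lt_succ_iff, Nat.forall_lt_succ_left]
  simp [add_assoc]

end StaysIn

namespace WStep

def ClosesBlock : List WStep → Prop
  | .W :: w => ClosesBlock w
  | .S :: _ => True
  | _ => False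

def BlocksClosed : List WStep → Prop
  | [] => True
  | s :: w => (s = .N → ClosesBlock w) ∧ BlocksClosed w

theorem closesBlock_iff (w : List WStep) :
    ClosesBlock w ↔ ∃ k : ℕ, (∀ j < k, w[j]? = some W) ∧ w[k]? = some S := by
  induction w with
  | nil => simp [ClosesBlock]
  | cons s w ih =>
    rw [← Nat.or_exists_add_one]
    simp only [Nat.forall_lt_succ_left]
    cases s <;> simp [ClosesBlock, ih]

theorem blocksClosed_iff (w : List WStep) :
    BlocksClosed w ↔ ∀ i, w[i]? = some N → ClosesBlock (w.drop (i + 1)) := by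
  induction w with
  | nil => simp [BlocksClosed]
  | cons s w ih => rw [← Nat.and_forall_add_one]; simp [BlocksClosed, ih]

theorem snd_sum_nonpos_of_blocksClosed {w : List WStep} (h : BlocksClosed w) :
    (ClosesBlock w → (w.map vec).sum.2 < 0) ∧ (w.map vec).sum.2 ≤ 0 := by
  induction w with
  | nil => simp [ClosesBlock]
  | cons s w ih =>
    obtain ⟨hN, hw⟩ := h
    have := ih hw
    cases s <;> simp_all [ClosesBlock, vec] <;> omega

/-- `Accepts b x w`: `w` is a valid continuation from the point `(x, b.toNat)`, where `b` records
that an `N` step is still waiting for its `S`. -/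
def Accepts : Bool → ℤ → List WStep → Prop
  | false, x, [] => x = 0
  | false, x, .E :: w => 0 ≤ x ∧ Accepts false (x + 1) w
  | false, x, .W :: w => 0 ≤ x ∧ Accepts false (x - 1) w
  | false, x, .N :: w => 0 ≤ x ∧ Accepts true x w
  | true, x, .W :: w => 1 ≤ x ∧ Accepts true (x - 1) w
  | true, x, .S :: w => 1 ≤ x ∧ Accepts false x w
  | _, _, _ => False

theorem accepts_iff (b : Bool) (x : ℤ) (w : List WStep) :
    Accepts b x w ↔ (x, (b.toNat : ℤ)) + (w.map vec).sum = 0 ∧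
      StaysIn vec {q | q.2 ≤ q.1} (x, b.toNat) w ∧ BlocksClosed w ∧ (b → ClosesBlock w) := by
  induction w generalizing b x with
  | nil => cases b <;> simp [Accepts, ClosesBlock, BlocksClosed, Prod.ext_iff]; omega
  | cons s w ih =>
    -- an `S` step at height `0` is never made up for, as each `N` is followed by its own `S`
    have := snd_sum_nonpos_of_blocksClosed (w := w)
    cases b <;> cases s <;>
      simp [Accepts, ih, BlocksClosed, ClosesBlock, vec, Prod.ext_iff] <;> grind

theorem sum_eq_zero_of_accepts {w : List WStep} (h : Accepts false 0 w) : (w.map vec).sum = 0 := by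
  simpa [← Prod.zero_eq_mk] using ((accepts_iff false 0 w).1 h).1

end WStep

theorem isLWalk_iff (n : ℕ) (w : List WStep) :
    IsLWalk n w ↔ w.length = 2 * n ∧ WStep.Accepts false 0 w := by
  simp [IsLWalk, WStep.accepts_iff, StaysIn, wpos, WStep.blocksClosed_iff, WStep.closesBlock_iff,
    List.getElem?_drop, ← Prod.zero_eq_mk]

namespace PStep

/-- `Accepts t p`: `p` is a valid continuation from a point of slack `x - 2y = t`. -/
def Accepts : ℤ → List PStep → Prop
  | t, [] => t = 0
  | t, .E :: p => 0 ≤ t ∧ Accepts (t + 1) p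
  | t, .N :: p => 0 ≤ t ∧ Accepts (t - 2) p

theorem accepts_iff (a : ℤ × ℤ) (p : List PStep) :
    Accepts (a.1 - 2 * a.2) p ↔ (a + (p.map vec).sum).1 = 2 * (a + (p.map vec).sum).2 ∧
      StaysIn vec {q | 2 * q.2 ≤ q.1} a p := by
  induction p generalizing a with
  | nil => simp [Accepts]; omega
  | cons s p ih =>
    cases s
    · have := ih (a + (1, 0)); simp_all [Accepts, vec, add_assoc]; grind
    · have := ih (a + (0, 1)); simp_all [Accepts, vec, add_assoc]; grind

theorem fst_add_snd_sum (p : List PStep) : (p.map vec).sum.1 + (p.map vec).sum.2 = p.length := by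
  induction p with
  | nil => rfl
  | cons s p ih => cases s <;> simp [vec] <;> omega

end PStep

theorem isPPath_iff (n : ℕ) (p : List PStep) :
    IsPPath n p ↔ p.length = 3 * n ∧ PStep.Accepts 0 p := by
  set v := (p.map PStep.vec).sum
  have hlen : v.1 + v.2 = p.length := PStep.fst_add_snd_sum p
  have hend : v = (2 * (n : ℤ), (n : ℤ)) ↔ p.length = 3 * n ∧ v.1 = 2 * v.2 := by
    rw [Prod.ext_iff]; omega
  have hacc := PStep.accepts_iff 0 p
  simp only [Prod.fst_zero, Prod.snd_zero, mul_zero, sub_zero, zero_add] at hacc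
  rw [IsPPath, ppos, List.take_length, hend, hacc, and_assoc]
  simp [StaysIn, ppos, v]

def WStep.toPath : WStep → List PStep
  | .E => [.E, .E]
  | .W => [.N]
  | .N => [.E, .N]
  | .S => [.E]

def walkToPath (w : List WStep) : List PStep := w.flatMap WStep.toPath

@[simp] theorem walkToPath_nil : walkToPath [] = [] := rfl

@[simp] theorem walkToPath_cons (s : WStep) (w : List WStep) :
    walkToPath (s :: w) = s.toPath ++ walkToPath w := rfl

/-- `b` is the block flag of `WStep.Accepts`. The cases `false, [E]` and `true, []` are junk:
no accepted path reaches them. -/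
def pathToWalk : Bool → List PStep → List WStep
  | false, [] => []
  | false, [.E] => []
  | false, .E :: .E :: p => .E :: pathToWalk false p
  | false, .E :: .N :: p => .N :: pathToWalk true p
  | false, .N :: p => .W :: pathToWalk false p
  | true, [] => []
  | true, .N :: p => .W :: pathToWalk true p
  | true, .E :: p => .S :: pathToWalk false p

theorem accepts_walkToPath {b : Bool} {x : ℤ} {w : List WStep} (h : WStep.Accepts b x w)
    {t : ℤ} (ht : t = 2 * x - b.toNat) : PStep.Accepts t (walkToPath w) := by
  induction w generalizing b x t with
  | nil => cases b <;> simp_all [WStep.Accepts, PStep.Accepts]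
  | cons s w ih =>
    cases b <;> cases s <;> simp only [WStep.Accepts] at h <;>
      simp only [walkToPath_cons, WStep.toPath, List.cons_append, List.nil_append,
        PStep.Accepts] <;>
      simp only [Bool.toNat_false, Bool.toNat_true, Nat.cast_zero, Nat.cast_one] at ht <;>
      and_intros
    all_goals first | omega | exact ih h.2 (by simp; omega)

theorem pathToWalk_walkToPath {b : Bool} {x : ℤ} {w : List WStep} (h : WStep.Accepts b x w) :
    pathToWalk b (walkToPath w) = w := by
  induction w generalizing b x with
  | nil => cases b <;> simp_all [WStep.Accepts, pathToWalk]
  | cons s w ih =>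
    cases b <;> cases s <;> simp only [WStep.Accepts] at h <;>
      simp only [walkToPath_cons, WStep.toPath, List.cons_append, List.nil_append,
        pathToWalk, ih h.2]

theorem accepts_pathToWalk {b : Bool} {t : ℤ} {p : List PStep} (h : PStep.Accepts t p) {x : ℤ}
    (ht : t = 2 * x - b.toNat) :
    WStep.Accepts b x (pathToWalk b p) ∧ walkToPath (pathToWalk b p) = p := by
  induction b, p using pathToWalk.induct generalizing t x with
  | case1 => simp_all [PStep.Accepts, pathToWalk, WStep.Accepts]
  | case2 => simp [PStep.Accepts] at h; omega
  | case3 p ih =>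
    simp only [PStep.Accepts, Bool.toNat_false, Nat.cast_zero, sub_zero] at h ht
    obtain ⟨hw, hp⟩ := ih h.2.2 (x := x + 1) (by simp; omega)
    simp [pathToWalk, WStep.Accepts, WStep.toPath, hw, hp]; omega
  | case4 p ih =>
    simp only [PStep.Accepts, Bool.toNat_false, Nat.cast_zero, sub_zero] at h ht
    obtain ⟨hw, hp⟩ := ih h.2.2 (x := x) (by simp; omega)
    simp [pathToWalk, WStep.Accepts, WStep.toPath, hw, hp]; omega
  | case5 p ih =>
    simp only [PStep.Accepts, Bool.toNat_false, Nat.cast_zero, sub_zero] at h ht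
    obtain ⟨hw, hp⟩ := ih h.2 (x := x - 1) (by simp; omega)
    simp [pathToWalk, WStep.Accepts, WStep.toPath, hw, hp]; omega
  | case6 => simp [PStep.Accepts] at h; simp at ht; omega
  | case7 p ih =>
    simp only [PStep.Accepts, Bool.toNat_true, Nat.cast_one] at h ht
    obtain ⟨hw, hp⟩ := ih h.2 (x := x - 1) (by simp; omega)
    simp [pathToWalk, WStep.Accepts, WStep.toPath, hw, hp]; omega
  | case8 p ih =>
    simp only [PStep.Accepts, Bool.toNat_true, Nat.cast_one] at h ht
    obtain ⟨hw, hp⟩ := ih h.2 (x := x) (by simp; omega)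
    simp [pathToWalk, WStep.Accepts, WStep.toPath, hw, hp]; omega

theorem two_mul_length_walkToPath (w : List WStep) :
    2 * ((walkToPath w).length : ℤ) =
      3 * w.length + (w.map WStep.vec).sum.1 + (w.map WStep.vec).sum.2 := by
  induction w with
  | nil => rfl
  | cons s w ih => cases s <;> simp [WStep.toPath, WStep.vec] at ih ⊢ <;> omega

theorem two_mul_length_walkToPath_of_accepts {w : List WStep} (h : WStep.Accepts false 0 w) :
    2 * (walkToPath w).length = 3 * w.length := by
  have := two_mul_length_walkToPath w
  rw [WStep.sum_eq_zero_of_accepts h] at this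
  simp only [Prod.fst_zero, Prod.snd_zero, add_zero] at this
  exact_mod_cast this

theorem isPPath_walkToPath {n : ℕ} {w : List WStep} (h : IsLWalk n w) :
    IsPPath n (walkToPath w) := by
  obtain ⟨hlen, hw⟩ := (isLWalk_iff n w).1 h
  have := two_mul_length_walkToPath_of_accepts hw
  exact (isPPath_iff n _).2 ⟨by omega, accepts_walkToPath hw (by simp)⟩

theorem isLWalk_pathToWalk {n : ℕ} {p : List PStep} (h : IsPPath n p) :
    IsLWalk n (pathToWalk false p) := by
  obtain ⟨hlen, hp⟩ := (isPPath_iff n p).1 h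
  obtain ⟨hw, hwp⟩ := accepts_pathToWalk hp (b := false) (x := 0) (by simp)
  have := two_mul_length_walkToPath_of_accepts hw
  rw [hwp] at this
  exact (isLWalk_iff n _).2 ⟨by omega, hw⟩

def walkEquivPath (n : ℕ) : {w : List WStep // IsLWalk n w} ≃ {p : List PStep // IsPPath n p} where
  toFun w := ⟨walkToPath w, isPPath_walkToPath w.2⟩
  invFun p := ⟨pathToWalk false p, isLWalk_pathToWalk p.2⟩
  left_inv w := Subtype.ext (pathToWalk_walkToPath ((isLWalk_iff n w).1 w.2).2)
  right_inv p := Subtype.ext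
    (accepts_pathToWalk ((isPPath_iff n p).1 p.2).2 (b := false) (x := 0) (by simp)).2

/-- For every `n ≥ 0`, `|L_n| = |P_n|`: the number of closed lattice
walks in `L_n` equals the number of lattice paths from `(0,0)` to `(2n, n)` with steps
`E, N` never going above the line `y = x/2`. -/
theorem lattice_walks_eq_lattice_paths (n : ℕ) :
    Nat.card {w : List WStep // IsLWalk n w} =
      Nat.card {p : List PStep // IsPPath n p} :=
  Nat.card_congr (walkEquivPath n)
end

section
/- Let θ be a matching on [2n] (n ≥ 1) that avoids the pattern 12312, let E = (j, 2n) be the edge of θ containing the node 2n, suppose some edge of θ crosses E, and let F = (x, y) be the edge crossing E whose end point y is largest. Then: (1) every node v with j < v < y is the end point (larger element) of its edge; (2) any two edges whose end points lie strictly between j and y do not cross each other; and (3) every edge whose end point lies strictly between j and y has its initial point strictly between x and j. -/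
set_option maxRecDepth 10000


/-- The initial point (smaller element) of the edge of the matching `f` containing node `i`. -/
def edgeLo {N : ℕ} (f : Fin N → Fin N) (i : Fin N) : Fin N := min i (f i)

/-- The end point (larger element) of the edge of the matching `f` containing node `i`. -/
def edgeHi {N : ℕ} (f : Fin N → Fin N) (i : Fin N) : Fin N := max i (f i)

/-- `f` encodes a perfect matching on `{0, 1, …, N-1}`: a fixed-point-free involution.
The edges are the pairs `{i, f i}`. -/
def IsMatching {N : ℕ} (f : Fin N → Fin N) : Prop :=
  Function.Involutive f ∧ ∀ i, f i ≠ i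

/-- The matching `f` contains the pattern `τ`: there are positions `p 0 < p 1 < ⋯`
such that the letters of the canonical sequential form at these positions are
order-isomorphic to `τ`.  (The letter of the canonical sequential form at position `p`
compares, across positions, exactly as the initial point of the edge containing `p` does,
since edges are numbered in increasing order of their initial points.) -/
def Contains {N : ℕ} (f : Fin N → Fin N) (τ : List ℕ) : Prop :=
  ∃ p : Fin τ.length → Fin N, StrictMono p ∧
    ∀ a b : Fin τ.length, edgeLo f (p a) < edgeLo f (p b) ↔ τ.get a < τ.get b

/-- The matching `f` avoids the pattern `τ`. -/
def Avoids {N : ℕ} (f : Fin N → Fin N) (τ : List ℕ) : Prop := ¬ Contains f τ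

/-- The number of matchings on `[2n]` avoiding every pattern in `pats`. -/
noncomputable def numAvoiding (n : ℕ) (pats : List (List ℕ)) : ℕ :=
  Nat.card {f : Fin (2*n) → Fin (2*n) // IsMatching f ∧ ∀ τ ∈ pats, Avoids f τ}

/-- The number of crossings of the matching `f`: the number of pairs of edges
`(a, f a)`, `(b, f b)` with `a < b < f a < f b`. -/
noncomputable def crossNum {N : ℕ} (f : Fin N → Fin N) : ℕ :=
  Nat.card {p : Fin N × Fin N // p.1 < p.2 ∧ p.2 < f p.1 ∧ f p.1 < f p.2}

/-- The number of matchings on `[2n]` avoiding every pattern in `pats` and having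
exactly `m` crossings. -/
noncomputable def numAvoidingCross (n m : ℕ) (pats : List (List ℕ)) : ℕ :=
  Nat.card {f : Fin (2*n) → Fin (2*n) //
    IsMatching f ∧ (∀ τ ∈ pats, Avoids f τ) ∧ crossNum f = m}

/-- The edges of the matching `f` containing the nodes `a` and `b` cross each other. -/
def Crosses {N : ℕ} (f : Fin N → Fin N) (a b : Fin N) : Prop :=
  (edgeLo f a < edgeLo f b ∧ edgeLo f b < edgeHi f a ∧ edgeHi f a < edgeHi f b) ∨
  (edgeLo f b < edgeLo f a ∧ edgeLo f a < edgeHi f b ∧ edgeHi f b < edgeHi f a)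

lemma key_cross {N : ℕ} (f : Fin N → Fin N) (hf : IsMatching f)
    (hav : Avoids f [1,2,3,1,2])
    (a1 b1 : Fin N) (h1 : a1 < b1) (h2 : b1 < f a1) (h3 : f a1 < f b1)
    (c : Fin N) (hc1 : b1 < c) (hc2 : c < f a1) : f c < b1 := by
  by_contra hge
  push_neg at hge
  have hne : f c ≠ b1 := by
    intro h
    have hc : c = f b1 := by rw [← h, hf.1]
    rw [hc] at hc2
    exact absurd (hc2.trans h3) (lt_irrefl _)
  have hcb : b1 < f c := lt_of_le_of_ne hge (Ne.symm hne)
  have el_a1 : edgeLo f a1 = a1 := min_eq_left (h1.trans h2).le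
  have el_b1 : edgeLo f b1 = b1 := min_eq_left (h2.trans h3).le
  have el_fa : edgeLo f (f a1) = a1 := by
    unfold edgeLo; rw [hf.1]; exact min_eq_right (h1.trans h2).le
  have el_fb : edgeLo f (f b1) = b1 := by
    unfold edgeLo; rw [hf.1]; exact min_eq_right (h2.trans h3).le
  have el_c : b1 < edgeLo f c := lt_min hc1 hcb
  have n1 : (a1 : ℕ) < b1 := h1
  have n2 : (b1 : ℕ) < f a1 := h2
  have n3 : ((f a1 : Fin N) : ℕ) < f b1 := h3
  have n4 : (b1 : ℕ) < c := hc1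
  have n5 : (c : ℕ) < f a1 := hc2
  have n6 : (b1 : ℕ) < (edgeLo f c : ℕ) := el_c
  apply hav
  refine ⟨![a1, b1, c, f a1, f b1], ?_, ?_⟩
  · intro a b hab
    have nab : (a : ℕ) < b := hab
    fin_cases a <;> fin_cases b <;> simp at nab ⊢ <;>
      first
        | exact h1 | exact hc1 | exact hc2 | exact h3
        | exact h1.trans hc1 | exact hc1.trans hc2 | exact hc2.trans h3
        | exact (h1.trans hc1).trans hc2 | exact (hc1.trans hc2).trans h3
        | exact ((h1.trans hc1).trans hc2).trans h3
  · intro a b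
    fin_cases a <;> fin_cases b <;>
      simp [el_a1, el_b1, el_fa, el_fb] <;>
      first
        | exact h1 | exact el_c | exact h1.trans el_c
        | exact h1.le | exact el_c.le | exact (h1.trans el_c).le
        | decide
        | exact iff_of_true h1 (by decide)
        | exact iff_of_true el_c (by decide)
        | exact iff_of_true (h1.trans el_c) (by decide)
        | exact iff_of_false h1.asymm (by decide)
        | exact iff_of_false el_c.asymm (by decide)
        | exact iff_of_false (h1.trans el_c).asymm (by decide)
        | exact iff_of_false (lt_irrefl _) (by decide)

/-- **Lemma 1.** Let `θ` (encoded by the fixed-point-free involution `f`)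
be a `12312`-avoiding matching on `[2n]` (`n ≥ 1`), let `E = (j, last)` be the edge
containing the last node `last` (so `j = f last`), and let `F = (x, f x)` be the edge
crossing `E` whose end point `f x` is largest (hypotheses `hx1`–`hx4` say `F` crosses `E`
and `hmax` says its end point is maximal among edges crossing `E`).  Then:
(1) every node `v` strictly between `j` and `f x` is the end point of its edge;
(2) any two edges with end points strictly between `j` and `f x` do not cross; and
(3) every edge with end point strictly between `j` and `f x` has its initial point
strictly between `x` and `j`. -/
theorem critical_crossing_structure (n : ℕ) (hn : 1 ≤ n)
    (f : Fin (2 * n) → Fin (2 * n)) (hf : IsMatching f) (hav : Avoids f [1,2,3,1,2])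
    (last : Fin (2 * n)) (hlast : (last : ℕ) = 2 * n - 1)
    (x : Fin (2 * n)) (hx1 : x < f x) (hx2 : x < f last) (hx3 : f last < f x)
    (hx4 : f x < last)
    (hmax : ∀ u : Fin (2 * n),
      u < f u → u < f last → f last < f u → f u < last → f u ≤ f x) :
    (∀ v : Fin (2 * n), f last < v → v < f x → f v < v) ∧
    (∀ a b : Fin (2 * n), f last < a → a < f x → f last < b → b < f x →
      ¬ Crosses f a b) ∧
    (∀ v : Fin (2 * n), f last < v → v < f x → x < f v ∧ f v < f last) := by
  have hfl : f (f last) = last := hf.1 last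
  -- key applied to the crossing pair (x, f x), (f last, last)
  have K1 : ∀ v : Fin (2 * n), f last < v → v < f x → f v < f last := by
    intro v hv1 hv2
    exact key_cross f hf hav x (f last) hx2 hx3 (by rw [hfl]; exact hx4) v hv1 hv2
  have part1 : ∀ v : Fin (2 * n), f last < v → v < f x → f v < v := by
    intro v hv1 hv2
    exact (K1 v hv1 hv2).trans hv1
  have part3 : ∀ v : Fin (2 * n), f last < v → v < f x → x < f v ∧ f v < f last := by
    intro v hv1 hv2
    refine ⟨?_, K1 v hv1 hv2⟩
    by_contra hle
    push_neg at hle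
    have hne : f v ≠ x := by
      intro h
      have : v = f x := by rw [← h, hf.1]
      rw [this] at hv2; exact absurd hv2 (lt_irrefl _)
    have hfvx : f v < x := lt_of_le_of_ne hle hne
    have hxv : x < v := hx2.trans hv1
    -- crossing pair (f v, v), (x, f x); node f last between x and v
    have := key_cross f hf hav (f v) x hfvx (by rw [hf.1]; exact hxv)
      (by rw [hf.1]; exact hv2) (f last) hx2 (by rw [hf.1]; exact hv1)
    rw [hfl] at this
    exact lt_irrefl _ ((hx1.trans hx4).trans this)
  refine ⟨part1, ?_, part3⟩
  intro a b ha1 ha2 hb1 hb2 hcr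
  have hfa := part1 a ha1 ha2
  have hfb := part1 b hb1 hb2
  have Ka := K1 a ha1 ha2
  have Kb := K1 b hb1 hb2
  have ela : edgeLo f a = f a := min_eq_right hfa.le
  have elb : edgeLo f b = f b := min_eq_right hfb.le
  have eha : edgeHi f a = a := max_eq_left hfa.le
  have ehb : edgeHi f b = b := max_eq_left hfb.le
  rcases hcr with ⟨h1, h2, h3⟩ | ⟨h1, h2, h3⟩
  · rw [ela, elb] at h1
    rw [elb, eha] at h2
    rw [eha, ehb] at h3
    -- crossing pair (f a, a), (f b, b); node f last between f b and a
    have := key_cross f hf hav (f a) (f b) h1 (by rw [hf.1]; exact h2)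
      (by rw [hf.1, hf.1]; exact h3) (f last) Kb (by rw [hf.1]; exact ha1)
    rw [hfl] at this
    exact lt_irrefl _ (this.trans (Kb.trans (hx3.trans hx4)))
  · rw [ela, elb] at h1
    rw [ela, ehb] at h2
    rw [eha, ehb] at h3
    have := key_cross f hf hav (f b) (f a) h1 (by rw [hf.1]; exact h2)
      (by rw [hf.1, hf.1]; exact h3) (f last) Ka (by rw [hf.1]; exact hb1)
    rw [hfl] at this
    exact lt_irrefl _ (this.trans (Ka.trans (hx3.trans hx4)))
end

section
/- Let θ be a matching on [2n] (n ≥ 1) that avoids the pattern 12312, let E = (j, 2n) be the edge of θ containing the node 2n, suppose some edge of θ crosses E, and let F be the edge crossing E whose end point is largest, say the end point of F is j + m. For 1 ≤ r ≤ m, let E_{j+r} denote the edge of θ whose end point is j + r. Then for any 1 ≤ r < s ≤ m, the only edge of θ that crosses both E_{j+r} and E_{j+s} is E; that is, if an edge e of θ crosses both E_{j+r} and E_{j+s}, then e = E. -/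
lemma contains12312 {N : ℕ} (f : Fin N → Fin N) (q0 q1 q2 q3 q4 : Fin N)
    (h01 : q0 < q1) (h12 : q1 < q2) (h23 : q2 < q3) (h34 : q3 < q4)
    (e03 : edgeLo f q3 = edgeLo f q0) (e14 : edgeLo f q4 = edgeLo f q1)
    (l01 : edgeLo f q0 < edgeLo f q1) (l12 : edgeLo f q1 < edgeLo f q2) :
    Contains f [1,2,3,1,2] := by
  refine ⟨![q0,q1,q2,q3,q4], ?_, ?_⟩
  · simp [h01, h12, h23, h34]
  · intro a b
    fin_cases a <;> fin_cases b <;>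
      simp [e03, e14, Fin.isValue, show ((3:Fin 5):ℕ) = 3 from rfl,
        show ((4:Fin 5):ℕ) = 4 from rfl] <;>
      first
        | exact l01 | exact l12 | exact l01.trans l12
        | exact le_of_lt l01 | exact le_of_lt l12
        | exact le_of_lt (l01.trans l12)


/-- **Lemma 2.** Let `θ` (encoded by the fixed-point-free involution `f`)
be a `12312`-avoiding matching on `[2n]` (`n ≥ 1`), let `E = (j, last)` be the edge
containing the last node `last` (so `j = f last`), and let `F = (x, f x)` be the edge
crossing `E` whose end point `f x` is largest.  Let `p < q` be two nodes strictly between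
`j` and `f x` (these are the end points `j + r`, `j + s` of the edges `E_{j+r}`,
`E_{j+s}`).  Then the only edge crossing both the edge containing `p` and the edge
containing `q` is `E` itself: if the edge containing a node `e` crosses both, then that
edge is `E`, i.e. `e = last` or `e = f last`. -/
theorem only_E_crosses_two_quasi_critical_edges (n : ℕ) (hn : 1 ≤ n)
    (f : Fin (2 * n) → Fin (2 * n)) (hf : IsMatching f) (hav : Avoids f [1,2,3,1,2])
    (last : Fin (2 * n)) (hlast : (last : ℕ) = 2 * n - 1)
    (x : Fin (2 * n)) (hx1 : x < f x) (hx2 : x < f last) (hx3 : f last < f x)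
    (hx4 : f x < last)
    (hmax : ∀ u : Fin (2 * n),
      u < f u → u < f last → f last < f u → f u < last → f u ≤ f x) :
    ∀ p q e : Fin (2 * n), f last < p → p < q → q < f x →
      Crosses f e p → Crosses f e q → e = last ∨ e = f last := by
  obtain ⟨hinv, hfix⟩ := hf
  intro p q e hjp hpq hqx hep heq
  set j := f last with hj
  have hjlast : j < last := lt_of_le_of_ne
    (by rw [Fin.le_def, hlast]; omega) (hfix last)
  have hfj : f j = last := hinv last
  -- basic edgeLo/edgeHi computations
  have loj : edgeLo f j = j := by simp [edgeLo, hfj, le_of_lt hjlast]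
  have lolast : edgeLo f last = j := by simp [edgeLo, ← hj, le_of_lt hjlast]
  have lox : edgeLo f x = x := by simp [edgeLo, le_of_lt hx1]
  have lofx : edgeLo f (f x) = x := by simp [edgeLo, hinv x, le_of_lt hx1]
  -- key fact: any node c strictly between j and f x has f c < j
  have key : ∀ c : Fin (2*n), j < c → c < f x → f c < j := by
    intro c hc1 hc2
    by_contra hcon
    push_neg at hcon
    have hcl : c < last := hc2.trans hx4
    have h1 : f c ≠ last := by
      intro h
      have : c = j := by rw [hj, ← h, hinv c]
      exact absurd this (ne_of_gt hc1)
    have h2 : f c ≠ j := by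
      intro h
      have : c = last := by rw [← hinv c, h, hfj]
      exact absurd this (ne_of_lt hcl)
    have hjfc : j < f c := lt_of_le_of_ne hcon (Ne.symm h2)
    have hloc : j < edgeLo f c := lt_min hc1 hjfc
    exact hav (contains12312 f x j c (f x) last hx2 hc1 hc2 hx4
      (by rw [lofx, lox]) (by rw [lolast, loj]) (by rw [lox, loj]; exact hx2)
      (by rw [loj]; exact hloc))
  -- edge data for p and q
  have hfp : f p < j := key p hjp (hpq.trans hqx)
  have hfq : f q < j := key q (hjp.trans hpq) hqx
  have lop : edgeLo f p = f p := by
    simp [edgeLo, le_of_lt (hfp.trans hjp)]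
  have hip : edgeHi f p = p := by
    simp [edgeHi, le_of_lt (hfp.trans hjp)]
  have loq : edgeLo f q = f q := by
    simp [edgeLo, le_of_lt (hfq.trans (hjp.trans hpq))]
  have hiq : edgeHi f q = q := by
    simp [edgeHi, le_of_lt (hfq.trans (hjp.trans hpq))]
  have lofp : edgeLo f (f p) = f p := by
    simp [edgeLo, hinv p, le_of_lt (hfp.trans hjp)]
  have lofq : edgeLo f (f q) = f q := by
    simp [edgeLo, hinv q, le_of_lt (hfq.trans (hjp.trans hpq))]
  -- edge data for e
  set g := edgeLo f e with hg
  set h := edgeHi f e with hh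
  have hgh : g < h := by
    rcases lt_or_gt_of_ne (hfix e) with h1 | h1
    · rw [hg, hh, edgeLo, edgeHi]
      rw [min_eq_right (le_of_lt h1), max_eq_left (le_of_lt h1)]; exact h1
    · rw [hg, hh, edgeLo, edgeHi]
      rw [min_eq_left (le_of_lt h1), max_eq_right (le_of_lt h1)]; exact h1
  have hfg : f g = h := by
    rcases le_or_gt e (f e) with h1 | h1
    · rw [hg, hh, edgeLo, edgeHi, min_eq_left h1, max_eq_right h1]
    · rw [hg, hh, edgeLo, edgeHi, min_eq_right (le_of_lt h1),
        max_eq_left (le_of_lt h1), hinv e]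
  have log : edgeLo f g = g := by rw [edgeLo, hfg, min_eq_left (le_of_lt hgh)]
  have loh : edgeLo f h = g := by
    have : f h = g := by rw [← hfg, hinv g]
    rw [edgeLo, this, min_eq_right (le_of_lt hgh)]
  -- if g = j then e ∈ {j, last}
  have hgE : g = j → e = last ∨ e = f last := by
    intro hgj
    rcases le_or_gt e (f e) with h1 | h1
    · right
      have : g = e := by rw [hg, edgeLo, min_eq_left h1]
      rw [← this, hgj]
    · left
      have : g = f e := by rw [hg, edgeLo, min_eq_right (le_of_lt h1)]
      have he : f e = j := by rw [← this, hgj]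
      have := congrArg f he
      rwa [hinv e, hfj] at this
  rw [Crosses, lop, hip] at hep
  rw [Crosses, loq, hiq] at heq
  rcases hep with ⟨hep1, hep2, hep3⟩ | ⟨hep1, hep2, hep3⟩ <;>
    rcases heq with ⟨heq1, heq2, heq3⟩ | ⟨heq1, heq2, heq3⟩
  · -- (i)+(I): g < f p < h < p,  g < f q < h < q
    exfalso
    rcases lt_trichotomy (f p) (f q) with hc | hc | hc
    · exact hav (contains12312 f g (f p) (f q) h p hep1 hc heq2 hep3
        (by rw [loh, log]) (by rw [lop, lofp]) (by rw [log, lofp]; exact hep1)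
        (by rw [lofp, lofq]; exact hc))
    · exact absurd (congrArg f hc) (by rw [hinv p, hinv q]; exact ne_of_lt hpq)
    · exact hav (contains12312 f g (f q) (f p) h q heq1 hc hep2 heq3
        (by rw [loh, log]) (by rw [loq, lofq]) (by rw [log, lofq]; exact heq1)
        (by rw [lofq, lofp]; exact hc))
  · -- (i)+(II): h < p  and  q < h : contradiction
    exact absurd (hep3.trans (hpq.trans heq3)) (lt_irrefl h)
  · -- (ii)+(I): f p < g < p < h  and  g < f q < h < q
    exfalso
    exact hav (contains12312 f g (f q) j h q heq1 hfq (lt_trans hjp hep3) heq3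
      (by rw [loh, log]) (by rw [loq, lofq]) (by rw [log, lofq]; exact heq1)
      (by rw [lofq, loj]; exact hfq))
  · -- (ii)+(II): f p < g < p < h  and  f q < g < q < h
    rcases lt_trichotomy g j with hc | hc | hc
    · exfalso
      exact hav (contains12312 f (f p) g j p h hep1 hc hjp hep3
        (by rw [lop, lofp]) (by rw [loh, log]) (by rw [lofp, log]; exact hep1)
        (by rw [log, loj]; exact hc))
    · exact hgE hc
    · exfalso
      have := key g hc (hep2.trans (hpq.trans hqx))
      rw [hfg] at this
      exact absurd ((lt_trans hjp hep3).trans this) (lt_irrefl j)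
end
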